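/- arXiv:1807.07945 — 5 statements merged into one kernel-verified Lean document; each statement's English description precedes it below -/
import Mathlib

section
/- Let k ≥ 2 and λ ≥ 1 be integers, and let x be an infinite word such that the lower density of AP(x,k,λ) is strictly less than (1 + ⌊(k² - k)/(λ² + λ)⌋)^{-1}. Then for every positive integer ℓ, there exists a nonempty finite word u with |u| ≤ (k-1)·⌊(k² - k)/(λ² + λ)⌋ such that u^ℓ is a factor of x. -/
/-- `u ^ ℓ` : the finite word `u` concatenated with itself `ℓ` times. -/
def powWord {A : Type*} (u : List A) (ℓ : ℕ) : List A :=
  (List.replicate ℓ u).flatten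

/-- The finite word `u` occurs in the infinite word `x` at position `i`. -/
def OccursAt {A : Type*} (x : ℕ → A) (u : List A) (i : ℕ) : Prop :=
  u = (List.range u.length).map fun j => x (i + j)

/-- The finite word `u` is a factor of the infinite word `x`. -/
def IsFactor {A : Type*} (x : ℕ → A) (u : List A) : Prop :=
  ∃ i, OccursAt x u i

/-- The `i`-th block of length `m` of the infinite word `x`, so that the prefix
of `x` of length `k*m` is `blockAt x m 0 ++ blockAt x m 1 ++ ⋯ ++ blockAt x m (k-1)`. -/
def blockAt {A : Type*} (x : ℕ → A) (m i : ℕ) : List A :=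
  (List.range m).map fun t => x (i * m + t)

/-- `APset x k λ` : the set of `m ≥ 1` such that the prefix of `x` of length `k*m` is a
`(k,λ)`-anti-power, i.e. writing it as `k` consecutive blocks of length `m`, for every
block index `j < k` the number of `i < k` whose block equals the `j`-th block is at most `λ`. -/
def APset {A : Type*} (x : ℕ → A) (k lam : ℕ) : Set ℕ :=
  {m | 1 ≤ m ∧ ∀ j < k,
    Nat.card {i : ℕ // i < k ∧ blockAt x m i = blockAt x m j} ≤ lam}

/-- The lower density of a set of natural numbers:
`liminf_{n → ∞} |S ∩ {1,…,n}| / n`. -/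
noncomputable def lowerDensity (S : Set ℕ) : ℝ :=
  Filter.atTop.liminf fun n => (Nat.card ↥(S ∩ Set.Icc 1 n) : ℝ) / n

/-!
Suppose `x` contains no `ℓ`-th power of a word of length at most `(k - 1) γ`, where
`γ = ⌊(k² - k)/(λ² + λ)⌋`. We show that among any `γ + 1` consecutive large lengths
`m, …, m + γ` there is an anti-power length, so `AP(x,k,λ)` has lower density at least
`1/(γ + 1)`. Otherwise each of these lengths has a block repeated `λ + 1` times, hence at least
`λ(λ + 1)` ordered pairs of equal blocks; since `(γ + 1) λ (λ + 1) > k² - k`, some pair of blocks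
`i < i + q` coincides for two lengths `n < n + δ ≤ n + γ`. Comparing the two coincidences shows that
`x` has period `q δ ≤ (k - 1) γ` on a stretch of length `n - i δ ≥ ℓ q δ`, which is an `ℓ`-th power.
-/

open Finset

section

variable {A : Type*}

def window (x : ℕ → A) (s n : ℕ) : List A :=
  (List.range n).map fun j => x (s + j)

@[simp] lemma length_window (x : ℕ → A) (s n : ℕ) : (window x s n).length = n := by
  simp [window]

lemma window_add (x : ℕ → A) (s a b : ℕ) :
    window x s (a + b) = window x s a ++ window x (s + a) b := by
  simp [window, List.range_add, add_assoc]

lemma window_congr {x : ℕ → A} {s s' n : ℕ} (h : ∀ j < n, x (s + j) = x (s' + j)) :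
    window x s n = window x s' n :=
  List.map_congr_left fun j hj => h j (List.mem_range.mp hj)

lemma occursAt_window (x : ℕ → A) (s n : ℕ) : OccursAt x (window x s n) s := by
  simp [OccursAt, window]

lemma powWord_succ (u : List A) (ℓ : ℕ) : powWord u (ℓ + 1) = u ++ powWord u ℓ := by
  simp [powWord, List.replicate_succ]

lemma powWord_window_of_period {x : ℕ → A} {p : ℕ} :
    ∀ {ℓ s : ℕ}, (∀ r, r + p < ℓ * p → x (s + r + p) = x (s + r)) →
      powWord (window x s p) ℓ = window x s (ℓ * p)
  | 0, _, _ => by simp [powWord, window]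
  | 1, _, _ => by simp [powWord]
  | ℓ + 2, s, h => by
    have hshift : window x (s + p) p = window x s p :=
      window_congr fun j hj => by rw [add_right_comm]; exact h j (by nlinarith)
    have ih := powWord_window_of_period (ℓ := ℓ + 1) (s := s + p) fun r hr => by
      simpa [add_assoc] using h (p + r) (by linarith)
    rw [powWord_succ, ← hshift, ih, hshift, ← window_add]
    ring_nf

lemma blockAt_eq_blockAt_iff {x : ℕ → A} {n i j : ℕ} :
    blockAt x n i = blockAt x n j ↔ ∀ s < n, x (i * n + s) = x (j * n + s) := by
  simp [blockAt, List.map_inj_left]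

/-- Position `(i + q) * n + i * δ + r` lies in block `i + q` of length `n`; its twin in block `i`
is `i * (n + δ) + r`, which lies in block `i` of length `n + δ`, whose twin in block `i + q` is
`q * δ` further on. -/
lemma period_of_blockAt_eq {x : ℕ → A} {n δ i q : ℕ}
    (h₁ : blockAt x n i = blockAt x n (i + q))
    (h₂ : blockAt x (n + δ) i = blockAt x (n + δ) (i + q)) (r : ℕ) (hr : i * δ + r < n) :
    x ((i + q) * n + i * δ + r + q * δ) = x ((i + q) * n + i * δ + r) := by
  have e₁ := blockAt_eq_blockAt_iff.mp h₁ (i * δ + r) hr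
  have e₂ := blockAt_eq_blockAt_iff.mp h₂ r (by omega)
  calc x ((i + q) * n + i * δ + r + q * δ) = x ((i + q) * (n + δ) + r) := by ring_nf
    _ = x (i * (n + δ) + r) := e₂.symm
    _ = x (i * n + (i * δ + r)) := by ring_nf
    _ = x ((i + q) * n + i * δ + r) := by rw [e₁, add_assoc]

lemma exists_isFactor_powWord_of_blockAt_eq {x : ℕ → A} {n δ i q ℓ : ℕ} (hq : 0 < q)
    (hδ : 0 < δ) (hn : ℓ * (q * δ) + i * δ ≤ n)
    (h₁ : blockAt x n i = blockAt x n (i + q))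
    (h₂ : blockAt x (n + δ) i = blockAt x (n + δ) (i + q)) :
    ∃ u : List A, u ≠ [] ∧ u.length = q * δ ∧ IsFactor x (powWord u ℓ) := by
  set s := (i + q) * n + i * δ
  have hper : ∀ r, r + q * δ < ℓ * (q * δ) → x (s + r + q * δ) = x (s + r) :=
    fun r hr => period_of_blockAt_eq h₁ h₂ r (by omega)
  refine ⟨window x s (q * δ), ?_, length_window .., s, ?_⟩
  · rw [← List.length_pos_iff, length_window]
    positivity
  · rw [powWord_window_of_period hper]
    exact occursAt_window x s _

lemma Finset.exists_ne_mem_mem_of_card_lt_sum {ι α : Type*} {s : Finset ι} {U : Finset α}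
    {F : ι → Finset α} (hF : ∀ i ∈ s, F i ⊆ U) (h : #U < ∑ i ∈ s, #(F i)) :
    ∃ i ∈ s, ∃ j ∈ s, i ≠ j ∧ ∃ a ∈ F i, a ∈ F j := by
  rw [← card_sigma] at h
  obtain ⟨⟨i, a⟩, hia, ⟨j, b⟩, hjb, hne, rfl : a = b⟩ :=
    exists_ne_map_eq_of_card_lt_of_maps_to h (f := Sigma.snd) fun p hp => by
      rw [mem_coe, mem_sigma] at hp
      exact hF _ hp.1 hp.2
  rw [mem_sigma] at hia hjb
  exact ⟨i, hia.1, j, hjb.1, fun hij => hne (by subst hij; rfl), a, hia.2, hjb.2⟩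

section BlockPairs

variable [DecidableEq A]

def blockPairs (x : ℕ → A) (k n : ℕ) : Finset (ℕ × ℕ) :=
  (range k).offDiag.filter fun p => blockAt x n p.1 = blockAt x n p.2

lemma mem_blockPairs {x : ℕ → A} {k n : ℕ} {p : ℕ × ℕ} :
    p ∈ blockPairs x k n ↔ p.1 < k ∧ p.2 < k ∧ p.1 ≠ p.2 ∧ blockAt x n p.1 = blockAt x n p.2 := by
  simp [blockPairs, and_assoc]

lemma mul_succ_le_card_blockPairs {x : ℕ → A} {k lam n : ℕ} (hn : 1 ≤ n)
    (h : n ∉ APset x k lam) : lam * (lam + 1) ≤ #(blockPairs x k n) := by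
  simp only [APset, Set.mem_ofPred_eq, not_and, not_forall, not_le] at h
  obtain ⟨j, -, hj⟩ := h hn
  set T := (range k).filter fun i => blockAt x n i = blockAt x n j
  have hT : lam + 1 ≤ #T := by
    have : Nat.card {i // i < k ∧ blockAt x n i = blockAt x n j} = #T := by
      rw [← Nat.card_eq_finsetCard]
      exact Nat.card_congr (Equiv.subtypeEquivRight fun i => by simp [T])
    omega
  have hsub : T.offDiag ⊆ blockPairs x k n := fun p hp => by
    simp only [mem_offDiag, T, mem_filter, mem_range] at hp
    exact mem_blockPairs.mpr ⟨hp.1.1, hp.2.1.1, hp.2.2, hp.1.2.trans hp.2.1.2.symm⟩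
  calc lam * (lam + 1) = (lam + 1) * (lam + 1 - 1) := by rw [Nat.add_sub_cancel, mul_comm]
    _ ≤ #T * (#T - 1) := Nat.mul_le_mul hT (Nat.sub_le_sub_right hT 1)
    _ = #T.offDiag := by rw [offDiag_card, Nat.mul_sub_one]
    _ ≤ #(blockPairs x k n) := card_le_card hsub

end BlockPairs

/-- Pigeonhole: each of the `γ + 1` lengths yields at least `λ (λ + 1)` ordered pairs of equal
blocks, and `(γ + 1) λ (λ + 1) > k² - k`, the number of all ordered pairs. -/
lemma exists_blockAt_eq_of_forall_notMem_APset {x : ℕ → A} {k lam m : ℕ} (hlam : 1 ≤ lam)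
    (hm : 1 ≤ m) (hgap : ∀ t ≤ (k ^ 2 - k) / (lam ^ 2 + lam), m + t ∉ APset x k lam) :
    ∃ i q t δ, 0 < q ∧ i + q < k ∧ 0 < δ ∧ t + δ ≤ (k ^ 2 - k) / (lam ^ 2 + lam) ∧
      blockAt x (m + t) i = blockAt x (m + t) (i + q) ∧
      blockAt x (m + t + δ) i = blockAt x (m + t + δ) (i + q) := by
  classical
  set γ := (k ^ 2 - k) / (lam ^ 2 + lam)
  have hcard : #(range k).offDiag < ∑ t ∈ range (γ + 1), #(blockPairs x k (m + t)) :=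
    calc #(range k).offDiag = k ^ 2 - k := by rw [offDiag_card, card_range, sq]
      _ < (γ + 1) * (lam * (lam + 1)) :=
        (Nat.lt_div_mul_add (b := lam ^ 2 + lam) (by positivity)).trans_eq (by ring)
      _ ≤ ∑ t ∈ range (γ + 1), #(blockPairs x k (m + t)) := by
        simpa using card_nsmul_le_sum (range (γ + 1)) _ _ fun t ht =>
          mul_succ_le_card_blockPairs (by omega) (hgap t (Nat.lt_succ_iff.mp (mem_range.mp ht)))
  obtain ⟨t, ht, t', ht', hne, ⟨a, b⟩, h, h'⟩ :=
    Finset.exists_ne_mem_mem_of_card_lt_sum (fun _ _ => filter_subset _ _) hcard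
  simp only [mem_range, Nat.lt_succ_iff] at ht ht'
  obtain ⟨ha, hb, hab, e⟩ := mem_blockPairs.mp h
  obtain ⟨-, -, -, e'⟩ := mem_blockPairs.mp h'
  clear h h'
  wlog htt' : t < t' generalizing t t'
  · exact this t' t hne.symm ht' ht e' e (by omega)
  wlog hab' : a < b generalizing a b
  · exact this b a hb ha hab.symm e.symm e'.symm (by omega)
  obtain ⟨q, rfl⟩ := Nat.exists_eq_add_of_lt hab'
  obtain ⟨δ, rfl⟩ := Nat.exists_eq_add_of_lt htt'
  exact ⟨a, q + 1, t, δ + 1, by omega, by omega, by omega, by omega, e,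
    by simpa [add_assoc] using e'⟩

open Filter Topology in
lemma le_lowerDensity {S : Set ℕ} {a C : ℝ}
    (h : ∀ n : ℕ, a * n - C ≤ Nat.card ↥(S ∩ Set.Icc 1 n)) : a ≤ lowerDensity S := by
  have hle_one : ∀ n : ℕ, (Nat.card ↥(S ∩ Set.Icc 1 n) : ℝ) / n ≤ 1 := by
    intro n
    rcases n.eq_zero_or_pos with rfl | hn
    · simp
    rw [div_le_one (by positivity)]
    have := Nat.card_mono (Set.finite_Icc 1 n) (Set.inter_subset_right (s := S))
    simp_all
  have hlim : Tendsto (fun n : ℕ => a - C / n) atTop (𝓝 a) := by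
    simpa using tendsto_const_nhds.sub (tendsto_const_div_atTop_nhds_zero_nat C)
  calc a = liminf (fun n : ℕ => a - C / n) atTop := hlim.liminf_eq.symm
    _ ≤ lowerDensity S := by
      refine liminf_le_liminf ?_ hlim.isBoundedUnder_ge
        (isBoundedUnder_of ⟨1, hle_one⟩).isCoboundedUnder_ge
      filter_upwards [eventually_gt_atTop 0] with n hn
      have hn : (0 : ℝ) < n := by exact_mod_cast hn
      rw [le_div_iff₀ hn, sub_mul, div_mul_cancel₀ _ hn.ne']
      exact h n

lemma le_card_inter_Icc_of_forall_exists_mem {S : Set ℕ} {g M : ℕ} (hM : 1 ≤ M)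
    (h : ∀ m ≥ M, ∃ t ≤ g, m + t ∈ S) {J n : ℕ} (hJ : J * (g + 1) ≤ n - M) :
    J ≤ Nat.card ↥(S ∩ Set.Icc 1 n) := by
  choose e he using fun c => h (M + c * (g + 1)) le_self_add
  set f := fun c => M + c * (g + 1) + e c
  have hf : StrictMono f := strictMono_nat_of_lt_succ fun c => by
    simp only [f, add_one_mul c]
    linarith [(he c).1]
  have hsub : (((range J).map ⟨f, hf.injective⟩ : Finset ℕ) : Set ℕ) ⊆ S ∩ Set.Icc 1 n := by
    intro y hy
    simp only [coe_map, Function.Embedding.coeFn_mk, coe_range, Set.mem_image, Set.mem_Iio] at hy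
    obtain ⟨c, hc, rfl⟩ := hy
    have hcJ : c * (g + 1) + (g + 1) ≤ J * (g + 1) := by
      rw [← add_one_mul]
      exact Nat.mul_le_mul_right _ hc
    have := (he c).1
    refine ⟨(he c).2, ?_, ?_⟩
    all_goals simp only [f]; omega
  calc J = #((range J).map ⟨f, hf.injective⟩) := by simp
    _ = Set.ncard (((range J).map ⟨f, hf.injective⟩ : Finset ℕ) : Set ℕ) :=
      (Set.ncard_coe_finset _).symm
    _ ≤ (S ∩ Set.Icc 1 n).ncard :=
      Set.ncard_le_ncard hsub ((Set.finite_Icc 1 n).inter_of_right S)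
    _ = Nat.card ↥(S ∩ Set.Icc 1 n) := (Nat.card_coe_set_eq _).symm

lemma inv_succ_le_lowerDensity {S : Set ℕ} {g M : ℕ} (hM : 1 ≤ M)
    (h : ∀ m ≥ M, ∃ t ≤ g, m + t ∈ S) : ((g : ℝ) + 1)⁻¹ ≤ lowerDensity S := by
  refine le_lowerDensity (C := M + 1) fun n => ?_
  set J := (n - M) / (g + 1)
  have hJ : J ≤ Nat.card ↥(S ∩ Set.Icc 1 n) :=
    le_card_inter_Icc_of_forall_exists_mem hM h (Nat.div_mul_le_self _ _)
  have hn : n < J * (g + 1) + (g + 1) + M := by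
    have : n - M < J * (g + 1) + (g + 1) := Nat.lt_div_mul_add (by omega)
    omega
  have hn' : (n : ℝ) < (J + 1) * (g + 1) + M := by
    exact_mod_cast (by linarith : n < (J + 1) * (g + 1) + M)
  have hJ' : ((g : ℝ) + 1)⁻¹ * n ≤ J + 1 + M := by
    rw [inv_mul_le_iff₀ (by positivity)]
    nlinarith [(M.cast_nonneg : (0 : ℝ) ≤ M), (g.cast_nonneg : (0 : ℝ) ≤ g)]
  have : (J : ℝ) ≤ Nat.card ↥(S ∩ Set.Icc 1 n) := by exact_mod_cast hJ
  linarith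

end

theorem statement1_general {A : Type*} (k lam : ℕ) (hlam : 1 ≤ lam) (x : ℕ → A)
    (hd : lowerDensity (APset x k lam) < ((1 : ℝ) + ((k ^ 2 - k) / (lam ^ 2 + lam) : ℕ))⁻¹) :
    ∀ ℓ : ℕ, 0 < ℓ → ∃ u : List A, u ≠ [] ∧
      u.length ≤ (k - 1) * ((k ^ 2 - k) / (lam ^ 2 + lam)) ∧ IsFactor x (powWord u ℓ) := by
  intro ℓ _
  set γ := (k ^ 2 - k) / (lam ^ 2 + lam)
  by_contra! hno
  have hwin : ∀ m ≥ (ℓ + 1) * ((k - 1) * γ) + 1, ∃ t ≤ γ, m + t ∈ APset x k lam := by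
    intro m hm
    by_contra! hgap
    obtain ⟨i, q, t, δ, hq, hqk, hδ, hδγ, h₁, h₂⟩ :=
      exists_blockAt_eq_of_forall_notMem_APset hlam (by omega) hgap
    have hqδ : q * δ ≤ (k - 1) * γ := Nat.mul_le_mul (by omega) (by omega)
    have hiδ : i * δ ≤ (k - 1) * γ := Nat.mul_le_mul (by omega) (by omega)
    have hn : ℓ * (q * δ) + i * δ ≤ m + t := by nlinarith
    obtain ⟨u, hu, hlen, hfac⟩ := exists_isFactor_powWord_of_blockAt_eq hq hδ hn h₁ h₂
    exact hno u hu (hlen ▸ hqδ) hfac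
  have := inv_succ_le_lowerDensity (by omega) hwin
  rw [add_comm] at hd
  linarith

/-- If `k ≥ 2`, `λ ≥ 1` and the lower density of `AP(x,k,λ)` is strictly
less than `(1 + ⌊(k² - k)/(λ² + λ)⌋)⁻¹`, then for every `ℓ ≥ 1` there is a nonempty word `u`
with `|u| ≤ (k-1)·⌊(k² - k)/(λ² + λ)⌋` such that `u^ℓ` is a factor of `x`. -/
theorem statement1 {A : Type*} (k lam : ℕ) (hk : 2 ≤ k) (hlam : 1 ≤ lam) (x : ℕ → A)
    (hd : lowerDensity (APset x k lam) < ((1 : ℝ) + ((k ^ 2 - k) / (lam ^ 2 + lam) : ℕ))⁻¹) :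
    ∀ ℓ : ℕ, 0 < ℓ → ∃ u : List A, u ≠ [] ∧
      u.length ≤ (k - 1) * ((k ^ 2 - k) / (lam ^ 2 + lam)) ∧ IsFactor x (powWord u ℓ) :=
  statement1_general k lam hlam x hd
end

section
/- Let y be the infinite word over the alphabet ℕ obtained by concatenating, for i = 1, 2, 3, …, the letter i repeated 2^i times (so y = 1^2 2^4 3^8 4^16 ⋯). Then y is ω-power-free, and yet for every k ≥ 17 the set AP(y,k) is empty, i.e., no prefix of y of length km (m ≥ 1) is a k-anti-power. In particular, there exists an ω-power-free infinite word over an infinite alphabet that has no k-anti-power prefix for any block length. -/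
/-- An infinite word `x` is `ω`-power-free if for every nonempty finite factor `u` of `x`
there is an `ℓ` such that `u^ℓ` is not a factor of `x`. -/
def OmegaPowerFree {A : Type*} (x : ℕ → A) : Prop :=
  ∀ u : List A, u ≠ [] → IsFactor x u → ∃ ℓ : ℕ, ¬ IsFactor x (powWord u ℓ)

/-- The prefix of `x` of length `k*m` is a `k`-anti-power: its `k` consecutive blocks
of length `m` are pairwise distinct. -/
def PrefixAntipower {A : Type*} (x : ℕ → A) (k m : ℕ) : Prop :=
  ∀ i < k, ∀ j < k, i ≠ j → blockAt x m i ≠ blockAt x m j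

/-- The infinite word `y = 1² 2⁴ 3⁸ 4¹⁶ ⋯` over the alphabet `ℕ`: for `i ≥ 1` the letter `i`
is repeated `2^i` times.  The letter at the (0-indexed) position `n` is `Nat.log 2 (n + 2)`,
since the block of the letter `i` occupies positions `2^i - 2, …, 2^(i+1) - 3`. -/
def yWord : ℕ → ℕ := fun n => Nat.log 2 (n + 2)

section Words

variable {A : Type*} {x : ℕ → A} {u : List A}

theorem OccursAt.getElem_eq {i : ℕ} (h : OccursAt x u i) {j : ℕ} (hj : j < u.length) :
    u[j] = x (i + j) := by
  rw [List.getElem_of_eq h hj]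
  simp

theorem powWord_two (u : List A) : powWord u 2 = u ++ u := by
  simp [powWord, List.replicate_succ]

theorem powWord_replicate (a : A) (n ℓ : ℕ) :
    powWord (List.replicate n a) ℓ = List.replicate (ℓ * n) a :=
  List.flatten_replicate_replicate

theorem exists_forall_isFactor_replicate_le {a : A} (ha : (x ⁻¹' {a}).Finite) :
    ∃ N, ∀ n, IsFactor x (List.replicate n a) → n ≤ N := by
  obtain ⟨N, hN⟩ := ha.bddAbove
  refine ⟨N + 1, fun n ⟨i, hi⟩ => ?_⟩
  rcases Nat.eq_zero_or_pos n with rfl | hn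
  · omega
  have hlast := hi.getElem_eq (j := n - 1) (by simp; omega)
  have : i + (n - 1) ≤ N := hN (by simpa using hlast.symm)
  omega

theorem not_prefixAntipower_of_constant_run {a : A} {k m s : ℕ} (hm : 0 < m)
    (hrun : ∀ p, s ≤ p → p < s + 3 * m → x p = a) (hs : s + 3 * m ≤ k * m) :
    ¬ PrefixAntipower x k m := by
  -- `s < i * m ≤ s + m`, so the blocks `i` and `i + 1` both lie inside the run.
  set i := s / m + 1
  have hdiv := Nat.div_add_mod s m
  have hmod := Nat.mod_lt s hm
  have hi : i * m = m * (s / m) + m := by ring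
  have hblock : blockAt x m i = blockAt x m (i + 1) := by
    refine List.map_congr_left fun t ht => ?_
    rw [List.mem_range] at ht
    rw [hrun _ (by omega) (by omega), hrun _ (by rw [add_mul]; omega) (by rw [add_mul]; omega)]
  have hik : (i + 1) * m < k * m := by rw [add_mul]; omega
  exact fun hap => hap i (by nlinarith) (i + 1) (Nat.lt_of_mul_lt_mul_right hik) (by omega) hblock

end Words

section Monotone

variable {α : Type*} [LinearOrder α] {x : ℕ → α}

theorem Monotone.eq_of_mem_of_isFactor_append_self (hx : Monotone x) {u : List α}
    (h : IsFactor x (u ++ u)) {b c : α} (hb : b ∈ u) (hc : c ∈ u) : b = c := by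
  obtain ⟨i, hi⟩ := h
  obtain ⟨j, hj, rfl⟩ := List.mem_iff_getElem.mp hb
  obtain ⟨j', hj', rfl⟩ := List.mem_iff_getElem.mp hc
  have hfirst {t} (ht : t < u.length) : u[t] = x (i + t) := by
    rw [← hi.getElem_eq (by simp; omega), List.getElem_append_left]
  have hsecond {t} (ht : t < u.length) : u[t] = x (i + (u.length + t)) := by
    rw [← hi.getElem_eq (by simp; omega), List.getElem_append_right (by omega)]
    simp
  apply le_antisymm
  · rw [hfirst hj, hsecond hj']
    exact hx (by omega)
  · rw [hsecond hj, hfirst hj']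
    exact hx (by omega)

theorem Monotone.omegaPowerFree (hx : Monotone x) (hfin : ∀ a, (x ⁻¹' {a}).Finite) :
    OmegaPowerFree x := by
  intro u hu _
  by_cases hsq : IsFactor x (powWord u 2)
  swap
  · exact ⟨2, hsq⟩
  rw [powWord_two] at hsq
  set a := u.head hu
  have hrep : u = List.replicate u.length a := List.eq_replicate_iff.mpr
    ⟨rfl, fun b hb => hx.eq_of_mem_of_isFactor_append_self hsq hb (List.head_mem hu)⟩
  obtain ⟨N, hN⟩ := exists_forall_isFactor_replicate_le (hfin a)
  have hlen : 0 < u.length := List.length_pos_iff.mpr hu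
  refine ⟨N + 1, fun hpow => ?_⟩
  rw [hrep, powWord_replicate] at hpow
  have := hN _ hpow
  nlinarith

end Monotone

theorem yWord_eq_of_pow_le_of_lt_pow {n a : ℕ} (h₁ : 2 ^ a ≤ n + 2) (h₂ : n + 2 < 2 ^ (a + 1)) :
    yWord n = a :=
  Nat.log_eq_of_pow_le_of_lt_pow h₁ h₂

theorem yWord_monotone : Monotone yWord :=
  fun _ _ h => Nat.log_mono_right (by omega)

theorem yWord_preimage_finite (a : ℕ) : (yWord ⁻¹' {a}).Finite := by
  refine (Set.finite_Iio (2 ^ (a + 1))).subset fun n hn => ?_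
  have hn : yWord n = a := hn
  have : n + 2 < 2 ^ (yWord n + 1) := Nat.lt_pow_succ_log_self one_lt_two (n + 2)
  rw [hn] at this
  exact Set.mem_Iio.mpr (by omega)

theorem yWord_not_prefixAntipower {k m : ℕ} (hk : 11 ≤ k) (hm : 0 < m) :
    ¬ PrefixAntipower yWord k m := by
  set a := Nat.log 2 m + 3
  have hlow : 2 ^ Nat.log 2 m ≤ m := Nat.pow_log_le_self 2 hm.ne'
  have hhigh : m < 2 ^ (Nat.log 2 m + 1) := Nat.lt_pow_succ_log_self one_lt_two m
  have ha : 2 ^ a = 8 * 2 ^ Nat.log 2 m := by rw [pow_add]; ring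
  rw [pow_succ] at hhigh
  refine not_prefixAntipower_of_constant_run (s := 2 ^ a - 2) (a := a) hm (fun p hp₁ hp₂ => ?_) ?_
  · exact yWord_eq_of_pow_le_of_lt_pow (by omega) (by rw [pow_succ]; omega)
  · have : 11 * m ≤ k * m := Nat.mul_le_mul_right m hk
    omega

/-- The word `y = 1² 2⁴ 3⁸ ⋯` is `ω`-power-free, yet for every `k ≥ 17`
no prefix of `y` of length `k*m` (`m ≥ 1`) is a `k`-anti-power, i.e. `AP(y,k) = ∅`.
In particular, there is an `ω`-power-free infinite word over an infinite alphabet having,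
for some `k`, no `k`-anti-power prefix of any block length. -/
theorem statement3 :
    (OmegaPowerFree yWord ∧
      ∀ k : ℕ, 17 ≤ k → ∀ m : ℕ, 1 ≤ m → ¬ PrefixAntipower yWord k m) ∧
    ∃ x : ℕ → ℕ, OmegaPowerFree x ∧
      ∃ k : ℕ, ∀ m : ℕ, 1 ≤ m → ¬ PrefixAntipower x k m := by
  have hfree : OmegaPowerFree yWord := yWord_monotone.omegaPowerFree yWord_preimage_finite
  have hnoAP : ∀ k : ℕ, 17 ≤ k → ∀ m : ℕ, 1 ≤ m → ¬ PrefixAntipower yWord k m :=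
    fun _ hk _ hm => yWord_not_prefixAntipower (by omega) hm
  exact ⟨⟨hfree, hnoAP⟩, yWord, hfree, 17, hnoAP 17 le_rfl⟩
end

section
/- For every integer k ≥ 2, every finite word of length (k³ - k² + k)·C(k,2) (over an arbitrary alphabet), where C(k,2) = k(k-1)/2, contains a factor that is a k-power or a factor that is a k-anti-power. In other words, N_α(k,k) ≤ (k³ - k² + k)·C(k,2) for every alphabet size α, where N_α(k,k) is the least N such that every word of length N over an alphabet of size α contains a k-power or a k-anti-power. -/
/-- The `i`-th block of length `m` of a finite word `v`. -/
def listBlock {A : Type*} (v : List A) (m i : ℕ) : List A :=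
  (v.drop (i * m)).take m

/-- `w` contains a factor that is a `k`-power `u^k` for some nonempty `u`. -/
def HasKPowerFactor {A : Type*} (k : ℕ) (w : List A) : Prop :=
  ∃ u : List A, u ≠ [] ∧ (List.replicate k u).flatten <:+: w

/-- `v` is a `k`-anti-power: `v` consists of `k` pairwise distinct blocks of equal
positive length. -/
def IsKAntipower {A : Type*} (k : ℕ) (v : List A) : Prop :=
  ∃ m : ℕ, 1 ≤ m ∧ v.length = k * m ∧
    ∀ i < k, ∀ j < k, i ≠ j → listBlock v m i ≠ listBlock v m j

/-- `w` contains a factor that is a `k`-anti-power. -/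
def HasKAntipowerFactor {A : Type*} (k : ℕ) (w : List A) : Prop :=
  ∃ v : List A, v <:+: w ∧ IsKAntipower k v

/-- `N_α(k,k)` : the least `N` such that every word of length `N` over an alphabet of
size `α` contains a `k`-power or a `k`-anti-power. -/
noncomputable def Nalpha (α k : ℕ) : ℕ :=
  sInf {N | ∀ w : List (Fin α), w.length = N →
    HasKPowerFactor k w ∨ HasKAntipowerFactor k w}

/-!
Suppose `w` has no `k`-anti-power factor and put `P = C(k,2)`, `a = (k-1)²P`. For every block
length `m ∈ [a, a + P]` the prefix of length `km` is not an anti-power, so two of its blocks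
`i < j` coincide. These are `P + 1` lengths and only `P` pairs, so two lengths `m < m + δ` share
the pair `(i, i + d)`. Chaining the two coincidences,
`w[(i+d)m + iδ + r] = w[im + iδ + r] = w[i(m+δ) + r] = w[(i+d)(m+δ) + r]`,
so from position `(i+d)m + iδ` on the word has period `dδ`, and `m ≥ a` makes this hold over
`k` periods: a `k`-power.
-/

theorem listBlock_take {A : Type*} (w : List A) {m i n : ℕ} (h : (i + 1) * m ≤ n) :
    listBlock (w.take n) m i = listBlock w m i := by
  rw [listBlock, listBlock, List.drop_take, List.take_take, Nat.min_eq_left]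
  rw [Nat.succ_mul] at h
  omega

theorem getElem?_eq_of_listBlock_eq {A : Type*} {w : List A} {m i j t : ℕ}
    (h : listBlock w m i = listBlock w m j) (ht : t < m) : w[i * m + t]? = w[j * m + t]? := by
  simpa [listBlock, List.getElem?_take, ht] using congrArg (·[t]?) h

theorem List.flatten_replicate_take_of_periodic {A : Type*} {p : ℕ} :
    ∀ (K : ℕ) (v : List A), v.length = K * p → (∀ n, n + p < v.length → v[n]? = v[n + p]?) →
      (List.replicate K (v.take p)).flatten = v
  | 0, v, hv, _ => by simp_all
  | K + 1, v, hv, hper => by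
    have hdrop : (List.replicate K (v.take p)).flatten = v.drop p := by
      rcases K.eq_zero_or_pos with rfl | hK
      · simp [List.drop_eq_nil_of_le, hv]
      have htake : (v.drop p).take p = v.take p := by
        refine List.ext_getElem? fun n => ?_
        by_cases hn : n < p
        · rw [List.getElem?_take, List.getElem?_take, if_pos hn, if_pos hn, List.getElem?_drop,
            add_comm, hper n (by nlinarith)]
        · simp [hn]
      rw [← htake]
      refine flatten_replicate_take_of_periodic K _
        (by rw [List.length_drop, hv, Nat.succ_mul, Nat.add_sub_cancel]) fun n hn => ?_
      rw [List.length_drop] at hn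
      rw [List.getElem?_drop, List.getElem?_drop, ← add_assoc]
      exact hper (p + n) (by omega)
    rw [List.replicate_succ, List.flatten_cons, hdrop, List.take_append_drop]

theorem hasKPowerFactor_of_periodic {A : Type*} {w : List A} {k p s : ℕ} (hk : 0 < k) (hp : 0 < p)
    (hw : s + k * p ≤ w.length) (hper : ∀ r, r + p < k * p → w[s + r]? = w[s + r + p]?) :
    HasKPowerFactor k w := by
  set v := (w.drop s).take (k * p)
  have hv : v.length = k * p := by rw [List.length_take, List.length_drop]; omega
  have hvw : ∀ n < k * p, v[n]? = w[s + n]? := fun n hn => by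
    simp [v, hn, List.getElem?_drop]
  refine ⟨v.take p, ?_, ?_⟩
  · rw [← List.length_pos_iff, List.length_take, hv]
    exact lt_min hp (Nat.mul_pos hk hp)
  · rw [List.flatten_replicate_take_of_periodic k v hv fun n hn => ?_]
    · exact ((List.take_prefix _ _).isInfix).trans (List.drop_suffix _ _).isInfix
    · rw [hv] at hn
      rw [hvw n (by omega), hvw (n + p) hn, ← add_assoc]
      exact hper n hn

theorem hasKPowerFactor_of_listBlock_eq {A : Type*} {w : List A} {k i d m δ : ℕ}
    (hd : 0 < d) (hδ : 0 < δ) (hik : i + d < k) (hm : (i + (k - 1) * d) * δ ≤ m)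
    (hw : k * (m + δ) ≤ w.length) (h₁ : listBlock w m i = listBlock w m (i + d))
    (h₂ : listBlock w (m + δ) i = listBlock w (m + δ) (i + d)) :
    HasKPowerFactor k w := by
  obtain ⟨K, rfl⟩ : ∃ K, k = K + 1 := ⟨k - 1, by omega⟩
  rw [Nat.add_sub_cancel] at hm
  have hm' : i * δ + K * (d * δ) ≤ m := by linarith
  refine hasKPowerFactor_of_periodic (s := (i + d) * m + i * δ) (p := d * δ) (by omega)
    (Nat.mul_pos hd hδ) (by nlinarith) fun r hr => ?_
  have hr' : r < K * (d * δ) := by nlinarith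
  calc w[(i + d) * m + i * δ + r]? = w[(i + d) * m + (i * δ + r)]? := by rw [add_assoc]
    _ = w[i * m + (i * δ + r)]? := (getElem?_eq_of_listBlock_eq h₁ (by omega)).symm
    _ = w[i * (m + δ) + r]? := by ring_nf
    _ = w[(i + d) * (m + δ) + r]? := getElem?_eq_of_listBlock_eq h₂ (by nlinarith)
    _ = w[(i + d) * m + i * δ + r + d * δ]? := by ring_nf

theorem exists_listBlock_eq_of_not_hasKAntipowerFactor {A : Type*} {w : List A} {k m : ℕ}
    (h : ¬ HasKAntipowerFactor k w) (hm : 0 < m) (hw : k * m ≤ w.length) :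
    ∃ i j, i < j ∧ j < k ∧ listBlock w m i = listBlock w m j := by
  by_contra hne
  push Not at hne
  refine h ⟨w.take (k * m), (List.take_prefix _ _).isInfix, m, hm, by simp [hw], ?_⟩
  intro i hi j hj hij
  rw [listBlock_take w (Nat.mul_le_mul_right m hi), listBlock_take w (Nat.mul_le_mul_right m hj)]
  rcases hij.lt_or_gt with hlt | hlt
  · exact hne i j hlt hj
  · exact (hne j i hlt hi).symm

theorem exists_lt_lt_of_forall_mem_Icc_choose_two {k a : ℕ} {R : ℕ → ℕ → ℕ → Prop}
    (h : ∀ m ∈ Finset.Icc a (a + k.choose 2), ∃ i j, i < j ∧ j < k ∧ R m i j) :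
    ∃ m m' i j, a ≤ m ∧ m < m' ∧ m' ≤ a + k.choose 2 ∧ i < j ∧ j < k ∧ R m i j ∧ R m' i j := by
  choose! f g hfg using h
  obtain ⟨m₁, hm₁, m₂, hm₂, hne, heq⟩ := Finset.exists_ne_map_eq_of_card_lt_of_maps_to
    (s := Finset.Icc a (a + k.choose 2)) (t := {x ∈ Finset.range k ×ˢ Finset.range k | x.1 < x.2})
    (f := fun m => (f m, g m))
    (by rw [Finset.card_product_filter_lt, Finset.card_range, Nat.card_Icc]; omega)
    fun m hm => by
      obtain ⟨hlt, hk, -⟩ := hfg m hm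
      simp only [Finset.coe_filter, Finset.mem_product, Finset.mem_range, Set.mem_ofPred_eq]
      omega
  wlog hlt : m₁ < m₂ generalizing m₁ m₂
  · exact this m₂ hm₂ m₁ hm₁ hne.symm heq.symm (by omega)
  simp only [Prod.mk.injEq] at heq
  obtain ⟨hfg₁, hk, hR₁⟩ := hfg m₁ hm₁
  obtain ⟨-, -, hR₂⟩ := hfg m₂ hm₂
  rw [← heq.1, ← heq.2] at hR₂
  rw [Finset.mem_Icc] at hm₁ hm₂
  exact ⟨m₁, m₂, f m₁, g m₁, hm₁.1, hlt, hm₂.2, hfg₁, hk, hR₁, hR₂⟩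

theorem hasKPowerFactor_or_hasKAntipowerFactor_of_le_length {A : Type*} {w : List A} {k : ℕ}
    (hk : 2 ≤ k) (hw : k * (((k - 1) ^ 2 + 1) * k.choose 2) ≤ w.length) :
    HasKPowerFactor k w ∨ HasKAntipowerFactor k w := by
  refine or_iff_not_imp_right.2 fun hanti => ?_
  obtain ⟨K, rfl⟩ : ∃ K, k = K + 1 := ⟨k - 1, by omega⟩
  rw [Nat.add_sub_cancel] at hw
  set P := (K + 1).choose 2
  have hP : 0 < P := Nat.choose_pos hk
  obtain ⟨m, m', i, j, ham, hmm', hm'P, hij, hjk, h₁, h₂⟩ :=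
    exists_lt_lt_of_forall_mem_Icc_choose_two (a := K ^ 2 * P)
      (R := fun m i j => listBlock w m i = listBlock w m j) fun m hm => by
        rw [Finset.mem_Icc] at hm
        exact exists_listBlock_eq_of_not_hasKAntipowerFactor hanti (by nlinarith) (by nlinarith)
  obtain ⟨d, rfl⟩ := Nat.exists_eq_add_of_lt hij
  obtain ⟨δ, rfl⟩ := Nat.exists_eq_add_of_lt hmm'
  have hid : i + K * (d + 1) ≤ K ^ 2 := by nlinarith
  exact hasKPowerFactor_of_listBlock_eq (d := d + 1) (δ := δ + 1) (by omega) (by omega) hjk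
    (by rw [Nat.add_sub_cancel]; nlinarith) (by nlinarith) h₁ h₂

/-- For every `k ≥ 2`, every word of length `(k³ - k² + k)·C(k,2)` over
an arbitrary alphabet contains a `k`-power factor or a `k`-anti-power factor; in other
words, `N_α(k,k) ≤ (k³ - k² + k)·C(k,2)` for every alphabet size `α`. -/
theorem statement7 (k : ℕ) (hk : 2 ≤ k) :
    (∀ (A : Type*) (w : List A),
      w.length = (k ^ 3 - k ^ 2 + k) * Nat.choose k 2 →
      HasKPowerFactor k w ∨ HasKAntipowerFactor k w) ∧
    (∀ α : ℕ, Nalpha α k ≤ (k ^ 3 - k ^ 2 + k) * Nat.choose k 2) := by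
  have hbound : k * (((k - 1) ^ 2 + 1) * k.choose 2) ≤ (k ^ 3 - k ^ 2 + k) * k.choose 2 := by
    rw [← mul_assoc]
    refine Nat.mul_le_mul_right _ ?_
    obtain ⟨K, rfl⟩ : ∃ K, k = K + 1 := ⟨k - 1, by omega⟩
    rw [Nat.add_sub_cancel]
    have : (K + 1) ^ 2 ≤ (K + 1) ^ 3 := Nat.pow_le_pow_right (by omega) (by omega)
    zify [this]
    nlinarith
  exact ⟨fun _ _ hw => hasKPowerFactor_or_hasKAntipowerFactor_of_le_length hk (hbound.trans hw.ge),
    fun _ => Nat.sInf_le fun _ hw =>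
      hasKPowerFactor_or_hasKAntipowerFactor_of_le_length hk (hbound.trans hw.ge)⟩
end

section
/- For every integer k ≥ 6, there exists an infinite binary word that is aperiodic, recurrent, and avoids (k, k-5)-anti-powers. One such word is the limit of the sequence defined by w₀ = 0 and w_{n+1} = w_n 1^{(k-3)|w_n|} w_n. -/
/-- `v` is a `(k,λ)`-anti-power: `v` consists of `k` blocks of equal positive length and
each block is equal to at most `λ` of the blocks. -/
def IsKLAntipower {A : Type*} (k lam : ℕ) (v : List A) : Prop :=
  ∃ m : ℕ, 1 ≤ m ∧ v.length = k * m ∧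
    ∀ j < k, Nat.card {i : ℕ // i < k ∧ listBlock v m i = listBlock v m j} ≤ lam

/-- The infinite word `x` avoids `(k,λ)`-anti-powers. -/
def AvoidsKLAntipowers {A : Type*} (x : ℕ → A) (k lam : ℕ) : Prop :=
  ∀ v : List A, IsFactor x v → ¬ IsKLAntipower k lam v

/-- `x` is eventually periodic: some suffix of `x` is periodic with period `p > 0`. -/
def EventuallyPeriodic {A : Type*} (x : ℕ → A) : Prop :=
  ∃ j p : ℕ, 0 < p ∧ ∀ n, j ≤ n → x (n + p) = x n

/-- `x` is recurrent: every finite factor of `x` occurs at arbitrarily large positions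
(hence infinitely often). -/
def Recurrent {A : Type*} (x : ℕ → A) : Prop :=
  ∀ u : List A, IsFactor x u → ∀ N : ℕ, ∃ i, N ≤ i ∧ OccursAt x u i

/-- The sequence `w₀ = 0`, `w_{n+1} = w_n 1^((k-3)|w_n|) w_n` of binary words. -/
def wSeq (k : ℕ) : ℕ → List (Fin 2)
  | 0 => [0]
  | n + 1 => wSeq k n ++ List.replicate ((k - 3) * (wSeq k n).length) 1 ++ wSeq k n

/-! With `b = k - 1`, the word `w_{n+1}` is `w_n`, a run of ones, and `w_n` again at offset
`(b - 1) bⁿ`. Hence at every scale `n` the zeros of the limit word lie in the clusters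
`[(b - 1) bⁿ j, (b - 1) bⁿ j + bⁿ)`, and zeros in different clusters are more than `(b - 2) bⁿ`
apart. Cut a window into `k` blocks of length `m` and take `n` with `bⁿ ≤ m < bⁿ⁺¹`. Zeros in
different clusters of scale `n + 1` lie at least `b - 2 = k - 3` blocks apart, so zeros in five
distinct blocks all lie in one cluster of scale `n + 1`, of length `bⁿ⁺¹`. Zeros two blocks apart
are in different clusters of scale `n`, so the first, third and fifth of them span more than
`2 (b - 2) bⁿ ≥ bⁿ⁺¹`. Hence at most four blocks contain a zero, and the other `k - 4 > k - 5`
blocks all equal `1ᵐ`. -/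

theorem occursAt_iff_getElem {A : Type*} {x : ℕ → A} {u : List A} {i : ℕ} :
    OccursAt x u i ↔ ∀ j (hj : j < u.length), u[j] = x (i + j) := by
  simp [OccursAt, List.ext_getElem_iff]

theorem OccursAt.shift {A : Type*} {x : ℕ → A} {u : List A} {i p : ℕ} (hu : OccursAt x u i)
    (hp : ∀ j < i + u.length, x (p + j) = x j) : OccursAt x u (p + i) := by
  rw [occursAt_iff_getElem] at hu ⊢
  intro j hj
  rw [hu j hj, add_assoc, hp _ (by omega)]

theorem listBlock_eq_of_occursAt {A : Type*} {x : ℕ → A} {v : List A} {a m t : ℕ}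
    (hv : OccursAt x v a) (ht : (t + 1) * m ≤ v.length) :
    listBlock v m t = (List.range m).map fun j => x (a + t * m + j) := by
  rw [add_mul, one_mul] at ht
  refine List.ext_getElem (by simp [listBlock]; omega) fun j hj _ => ?_
  simp only [listBlock, List.getElem_take, List.getElem_drop, List.getElem_map,
    List.getElem_range]
  rw [occursAt_iff_getElem.mp hv _ (by simp [listBlock] at hj; omega), add_assoc]

theorem not_isKLAntipower_of_equal_blocks {A : Type*} {k lam : ℕ} {v : List A}
    (h : ∀ m, 1 ≤ m → v.length = k * m → ∃ S : Finset ℕ, S ⊆ Finset.range k ∧ lam < S.card ∧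
      ∃ u, ∀ i ∈ S, listBlock v m i = u) :
    ¬ IsKLAntipower k lam v := by
  rintro ⟨m, hm, hlen, hcard⟩
  obtain ⟨S, hSk, hlam, u, hSu⟩ := h m hm hlen
  obtain ⟨j, hj⟩ := Finset.card_pos.mp (by omega : 0 < S.card)
  have hsub : (S : Set ℕ) ⊆ {i | i < k ∧ listBlock v m i = listBlock v m j} := fun i hi =>
    ⟨Finset.mem_range.mp (hSk hi), (hSu i hi).trans (hSu j hj).symm⟩
  have hfin : {i | i < k ∧ listBlock v m i = listBlock v m j}.Finite :=
    (Set.finite_lt_nat k).subset fun _ hi => hi.1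
  have hle := Set.ncard_le_ncard hsub hfin
  rw [Set.ncard_coe_finset, ← Nat.card_coe_set_eq] at hle
  have := hcard j (Finset.mem_range.mp (hSk hj))
  exact absurd (hle.trans this) (by omega)

theorem not_eventuallyPeriodic_of_frequently {A : Type*} {x : ℕ → A} {c : A}
    (hc : ∀ N, ∃ z, N ≤ z ∧ x z = c) (hrun : ∀ N L, ∃ s, N ≤ s ∧ ∀ i < L, x (s + i) ≠ c) :
    ¬ EventuallyPeriodic x := by
  rintro ⟨J, p, hp, hper⟩
  obtain ⟨z, hJz, hz⟩ := hc J
  have hiter : ∀ t, x (z + t * p) = c := by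
    intro t
    induction t with
    | zero => simpa using hz
    | succ t ih => rw [add_mul, one_mul, ← add_assoc, hper _ (by omega), ih]
  obtain ⟨s, hzs, hs⟩ := hrun z (p + 1)
  have hr := Nat.mod_lt (s - z) hp
  have hhit : s + (p - (s - z) % p) = z + ((s - z) / p + 1) * p := by
    have := Nat.div_add_mod (s - z) p
    rw [add_mul, one_mul, mul_comm]
    omega
  exact hs _ (by omega) (hhit ▸ hiter _)

theorem sub_div_add_le_sub_div {a m z z' e : ℕ} (hm : 0 < m) (ha : a ≤ z)
    (h : z + e * m ≤ z') : (z - a) / m + e ≤ (z' - a) / m := by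
  rw [← Nat.add_mul_div_right _ _ hm]
  exact Nat.div_le_div_right (by omega)

theorem sub_div_le_sub_div_add {a m z z' e : ℕ} (hm : 0 < m) (ha : a ≤ z)
    (h : z' ≤ z + e * m) : (z' - a) / m ≤ (z - a) / m + e := by
  rw [← Nat.add_mul_div_right _ _ hm]
  exact Nat.div_le_div_right (by omega)

theorem wSeq_prefix_succ (k n : ℕ) : wSeq k n <+: wSeq k (n + 1) :=
  ⟨List.replicate ((k - 3) * (wSeq k n).length) 1 ++ wSeq k n, by simp [wSeq]⟩

theorem wSeq_prefix_of_le (k : ℕ) {m n : ℕ} (h : m ≤ n) : wSeq k m <+: wSeq k n := by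
  induction n, h using Nat.le_induction with
  | base => exact List.prefix_refl _
  | succ n _ ih => exact ih.trans (wSeq_prefix_succ k n)

theorem lt_length_wSeq (k n : ℕ) : n < (wSeq k n).length := by
  induction n with
  | zero => simp [wSeq]
  | succ n ih => simp only [wSeq, List.length_append]; omega

/-- The limit of `wSeq k`: `wSeq k (i + 1)` is longer than `i`, so the default of `getD` is never
used. -/
def limitWord (k i : ℕ) : Fin 2 := (wSeq k (i + 1)).getD i 1

theorem limitWord_eq_getD (k : ℕ) {n i : ℕ} (hi : i < (wSeq k n).length) :
    limitWord k i = (wSeq k n).getD i 1 := by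
  have hpre : ∀ {m n}, m ≤ n → i < (wSeq k m).length →
      (wSeq k n).getD i 1 = (wSeq k m).getD i 1 := by
    intro m n hmn him
    obtain ⟨t, ht⟩ := wSeq_prefix_of_le k hmn
    rw [← ht, List.getD_append _ _ _ _ him]
  rcases le_total (i + 1) n with h | h
  · exact (hpre h ((Nat.lt_succ_self i).trans (lt_length_wSeq k (i + 1)))).symm
  · exact hpre h hi

theorem occursAt_limitWord_wSeq (k n : ℕ) : OccursAt (limitWord k) (wSeq k n) 0 :=
  occursAt_iff_getElem.mpr fun j hj => by
    rw [zero_add, limitWord_eq_getD k hj, List.getD_eq_getElem _ _ hj]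

theorem limitWord_apply_zero (k : ℕ) : limitWord k 0 = 0 := by
  simp [limitWord, wSeq]

-- From here on `k = d + 3`, so the base `b = k - 1` is `d + 2`.
theorem length_wSeq (d n : ℕ) : (wSeq (d + 3) n).length = (d + 2) ^ n := by
  induction n with
  | zero => simp [wSeq]
  | succ n ih =>
    simp only [wSeq, List.length_append, List.length_replicate, ih, Nat.add_sub_cancel, pow_succ]
    ring

section

variable {d : ℕ}

theorem limitWord_eq_one {n i : ℕ} (h₁ : (d + 2) ^ n ≤ i) (h₂ : i < (d + 1) * (d + 2) ^ n) :
    limitWord (d + 3) i = 1 := by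
  have hlen : i < (wSeq (d + 3) (n + 1)).length := by
    rw [length_wSeq, pow_succ]; nlinarith
  rw [limitWord_eq_getD _ hlen]
  simp only [wSeq, Nat.add_sub_cancel]
  have hL := length_wSeq d n
  rw [List.getD_append _ _ _ _
      (by simp only [List.length_append, List.length_replicate]; nlinarith),
    List.getD_append_right _ _ _ _ (by omega)]
  simp

theorem limitWord_add {n i : ℕ} (hi : i < (d + 2) ^ n) :
    limitWord (d + 3) ((d + 1) * (d + 2) ^ n + i) = limitWord (d + 3) i := by
  have hL := length_wSeq d n
  have hlen : (d + 1) * (d + 2) ^ n + i < (wSeq (d + 3) (n + 1)).length := by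
    rw [length_wSeq, pow_succ]; nlinarith
  rw [limitWord_eq_getD _ hlen, limitWord_eq_getD _ (n := n) (by omega)]
  simp only [wSeq, Nat.add_sub_cancel]
  rw [List.getD_append_right _ _ _ _
    (by simp only [List.length_append, List.length_replicate]; nlinarith)]
  congr 1
  simp only [List.length_append, List.length_replicate, hL]
  have : (d + 1) * (d + 2) ^ n = (d + 2) ^ n + d * (d + 2) ^ n := by ring
  omega

theorem limitWord_mod_lt {z : ℕ} (hz : limitWord (d + 3) z = 0) (n : ℕ) :
    z % ((d + 1) * (d + 2) ^ n) < (d + 2) ^ n := by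
  obtain ⟨N, hN⟩ : ∃ N, z < (d + 2) ^ N := ⟨z, Nat.lt_pow_self (by omega)⟩
  induction N generalizing z with
  | zero =>
    obtain rfl : z = 0 := by simpa using hN
    simp only [Nat.zero_mod]; positivity
  | succ N ih =>
    rcases lt_or_ge z ((d + 2) ^ N) with h | h
    · exact ih hz h
    rcases lt_or_ge z ((d + 1) * (d + 2) ^ N) with h' | h'
    · exact absurd ((limitWord_eq_one h h').symm.trans hz) (by decide)
    obtain ⟨r, rfl⟩ := Nat.exists_eq_add_of_le h'
    have hr : r < (d + 2) ^ N := by rw [pow_succ] at hN; nlinarith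
    rw [limitWord_add hr] at hz
    rcases le_or_gt n N with hnN | hNn
    · obtain ⟨c, hc⟩ : (d + 1) * (d + 2) ^ n ∣ (d + 1) * (d + 2) ^ N :=
        mul_dvd_mul_left _ (pow_dvd_pow _ hnN)
      rw [hc, Nat.mul_add_mod]
      exact ih hz hr
    · calc _ ≤ _ := Nat.mod_le _ _
        _ < (d + 2) ^ (N + 1) := hN
        _ ≤ (d + 2) ^ n := Nat.pow_le_pow_right (by omega) hNn

theorem lt_add_of_div_eq_of_limitWord_eq_zero {z z' : ℕ} (hz' : limitWord (d + 3) z' = 0) (n : ℕ)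
    (h : z / ((d + 1) * (d + 2) ^ n) = z' / ((d + 1) * (d + 2) ^ n)) :
    z' < z + (d + 2) ^ n := by
  have := limitWord_mod_lt hz' n
  have h₁ := Nat.div_add_mod z ((d + 1) * (d + 2) ^ n)
  have h₂ := Nat.div_add_mod z' ((d + 1) * (d + 2) ^ n)
  rw [h] at h₁
  omega

theorem add_lt_of_div_lt_of_limitWord_eq_zero {z z' : ℕ} (hz : limitWord (d + 3) z = 0) (n : ℕ)
    (h : z / ((d + 1) * (d + 2) ^ n) < z' / ((d + 1) * (d + 2) ^ n)) :
    z + d * (d + 2) ^ n < z' := by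
  have := limitWord_mod_lt hz n
  set q := (d + 1) * (d + 2) ^ n with hq
  have h₁ := Nat.div_add_mod z q
  have h₂ := Nat.div_add_mod z' q
  have h₃ : q * (z / q) + q ≤ q * (z' / q) := by nlinarith
  have : q = d * (d + 2) ^ n + (d + 2) ^ n := by rw [hq]; ring
  omega


theorem not_eventuallyPeriodic_limitWord (hd : 1 ≤ d) :
    ¬ EventuallyPeriodic (limitWord (d + 3)) := by
  refine not_eventuallyPeriodic_of_frequently (c := 0) (fun N => ?_) (fun N L => ?_)
  · have := Nat.lt_pow_self (n := N) (a := d + 2) (by omega)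
    have hzero := limitWord_add (d := d) (n := N) (i := 0) (by positivity)
    rw [add_zero, limitWord_apply_zero] at hzero
    exact ⟨(d + 1) * (d + 2) ^ N, by nlinarith, hzero⟩
  · have := Nat.lt_pow_self (n := N + L) (a := d + 2) (by omega)
    refine ⟨(d + 2) ^ (N + L), by omega, fun i hi => ?_⟩
    rw [limitWord_eq_one le_self_add (by nlinarith)]
    decide

theorem recurrent_limitWord (d : ℕ) : Recurrent (limitWord (d + 3)) := by
  rintro u ⟨i, hu⟩ N
  have := Nat.lt_pow_self (n := i + u.length + N) (a := d + 2) (by omega)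
  refine ⟨(d + 1) * (d + 2) ^ (i + u.length + N) + i, by nlinarith,
    hu.shift fun j hj => limitWord_add (by omega)⟩

theorem not_five_blocks_with_zero (hd : 2 ≤ d) {a m : ℕ} (hm : 0 < m) (z : Fin 5 → ℕ)
    (hz : ∀ i, limitWord (d + 3) (z i) = 0) (ha : ∀ i, a ≤ z i) (hlt : ∀ i, z i < a + (d + 3) * m)
    (hmono : StrictMono fun i => (z i - a) / m) : False := by
  have h01 := hmono (show (0 : Fin 5) < 1 by decide)
  have h12 := hmono (show (1 : Fin 5) < 2 by decide)
  have h23 := hmono (show (2 : Fin 5) < 3 by decide)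
  have h34 := hmono (show (3 : Fin 5) < 4 by decide)
  have h4 : (z 4 - a) / m < d + 3 :=
    Nat.div_lt_of_lt_mul (by have := hlt 4; have := ha 4; rw [mul_comm]; omega)
  simp only at h01 h12 h23 h34
  have := Nat.zero_le ((z 0 - a) / m)
  have hzmono : ∀ i j, i < j → z i ≤ z j := fun i j hij => by
    by_contra! h
    exact (hmono hij).not_ge (Nat.div_le_div_right (Nat.sub_le_sub_right h.le a))
  set n := Nat.log (d + 2) m
  have hBm : (d + 2) ^ n ≤ m := Nat.pow_log_le_self _ hm.ne'
  have hmB : m < (d + 2) ^ (n + 1) := Nat.lt_pow_succ_log_self (by omega) _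
  have same_cluster : ∀ i j, i < j → (z j - a) / m < (z i - a) / m + d →
      z i / ((d + 1) * (d + 2) ^ (n + 1)) = z j / ((d + 1) * (d + 2) ^ (n + 1)) := by
    intro i j hij hblk
    by_contra hne
    have hfar := add_lt_of_div_lt_of_limitWord_eq_zero (hz i) (n + 1)
      (lt_of_le_of_ne (Nat.div_le_div_right (hzmono i j hij)) hne)
    have := sub_div_add_le_sub_div (e := d) hm (ha i) (by nlinarith)
    omega
  have h04 : z 0 / ((d + 1) * (d + 2) ^ (n + 1)) = z 4 / ((d + 1) * (d + 2) ^ (n + 1)) :=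
    ((same_cluster 0 1 (by decide) (by omega)).trans
      (same_cluster 1 2 (by decide) (by omega))).trans
    ((same_cluster 2 3 (by decide) (by omega)).trans (same_cluster 3 4 (by decide) (by omega)))
  have hclose := lt_add_of_div_eq_of_limitWord_eq_zero (hz 4) (n + 1) h04
  have far : ∀ i j, i < j → (z i - a) / m + 2 ≤ (z j - a) / m →
      z i + d * (d + 2) ^ n < z j := by
    intro i j hij hblk
    refine add_lt_of_div_lt_of_limitWord_eq_zero (hz i) n
      (lt_of_le_of_ne (Nat.div_le_div_right (hzmono i j hij)) ?_)
    intro heq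
    have := lt_add_of_div_eq_of_limitWord_eq_zero (hz j) n heq
    have := sub_div_le_sub_div_add (z' := z j) (e := 1) hm (ha i) (by omega)
    omega
  have h02 := far 0 2 (by decide) (by omega)
  have h24 := far 2 4 (by decide) (by omega)
  have : (d + 2) ^ (n + 1) ≤ d * (d + 2) ^ n + d * (d + 2) ^ n := by
    rw [pow_succ, mul_comm, ← add_mul]
    exact Nat.mul_le_mul_right _ (by omega)
  omega

def zeroBlocks (x : ℕ → Fin 2) (k a m : ℕ) : Finset ℕ :=
  ((Finset.Ico a (a + k * m)).filter (x · = 0)).image fun z => (z - a) / m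

theorem card_zeroBlocks_limitWord_le (hd : 2 ≤ d) (a : ℕ) {m : ℕ} (hm : 0 < m) :
    (zeroBlocks (limitWord (d + 3)) (d + 3) a m).card ≤ 4 := by
  by_contra! h
  let e : Fin 5 ↪o ℕ := (Fin.castLEOrderEmb h).trans ((zeroBlocks _ _ a m).orderEmbOfFin rfl)
  have : ∀ i, ∃ z, z ∈ (Finset.Ico a (a + (d + 3) * m)).filter (limitWord (d + 3) · = 0) ∧
      (z - a) / m = e i := fun i => Finset.mem_image.mp (Finset.orderEmbOfFin_mem _ rfl _)
  choose z hz hze using this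
  simp only [Finset.mem_filter, Finset.mem_Ico] at hz
  refine not_five_blocks_with_zero hd hm z (fun i => (hz i).2) (fun i => (hz i).1.1)
    (fun i => (hz i).1.2) ?_
  simpa only [hze] using e.strictMono

theorem avoidsKLAntipowers_limitWord (hd : 2 ≤ d) :
    AvoidsKLAntipowers (limitWord (d + 3)) (d + 3) (d - 2) := by
  rintro v ⟨a, hv⟩
  refine not_isKLAntipower_of_equal_blocks fun m hm hlen => ?_
  set Z := zeroBlocks (limitWord (d + 3)) (d + 3) a m
  refine ⟨Finset.range (d + 3) \ Z, Finset.sdiff_subset, ?_, List.replicate m 1, fun t ht => ?_⟩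
  · have : Z.card ≤ 4 := card_zeroBlocks_limitWord_le hd a hm
    have := Finset.le_card_sdiff Z (Finset.range (d + 3))
    rw [Finset.card_range] at this
    omega
  rw [Finset.mem_sdiff, Finset.mem_range] at ht
  rw [listBlock_eq_of_occursAt hv (by rw [hlen]; exact Nat.mul_le_mul_right _ ht.1)]
  refine List.ext_getElem (by simp) fun j hj _ => ?_
  simp only [List.getElem_map, List.getElem_range, List.getElem_replicate]
  rw [List.length_map, List.length_range] at hj
  refine Fin.eq_one_of_ne_zero _ fun hzero => ht.2 (Finset.mem_image.mpr ⟨a + t * m + j, ?_, ?_⟩)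
  · have : t * m + m ≤ (d + 3) * m := by nlinarith
    simp only [Finset.mem_filter, Finset.mem_Ico]
    exact ⟨⟨by omega, by omega⟩, hzero⟩
  · rw [show a + t * m + j - a = j + t * m by omega, Nat.add_mul_div_right _ _ hm,
      Nat.div_eq_of_lt hj, zero_add]

end

/-- For every `k ≥ 6` there is an infinite binary word that is aperiodic,
recurrent, and avoids `(k, k-5)`-anti-powers; one such word is the limit of the sequence
`w₀ = 0`, `w_{n+1} = w_n 1^((k-3)|w_n|) w_n` (i.e. the word having every `w_n` as a prefix). -/
theorem statement12 (k : ℕ) (hk : 6 ≤ k) :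
    ∃ x : ℕ → Fin 2, (∀ n, OccursAt x (wSeq k n) 0) ∧
      ¬ EventuallyPeriodic x ∧ Recurrent x ∧ AvoidsKLAntipowers x k (k - 5) := by
  obtain ⟨d, rfl⟩ : ∃ d, k = d + 3 := ⟨k - 3, by omega⟩
  rw [show d + 3 - 5 = d - 2 by omega]
  exact ⟨limitWord (d + 3), occursAt_limitWord_wSeq _, not_eventuallyPeriodic_limitWord (by omega),
    recurrent_limitWord d, avoidsKLAntipowers_limitWord (by omega)⟩
end

section
/- Let θ ∈ (0,1) be irrational and x ∈ ℝ, and let s_{θ,x} be the upper mechanical word with angle θ and initial position x (such words are exactly the Sturmian words). Then for every integer k ≥ 2 and every position j ≥ 1, there is an occurrence of a k-anti-power in s_{θ,x} starting at position j: that is, there exists m ≥ 1 such that the factor of s_{θ,x} of length km beginning at position j is a k-anti-power. -/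
/-!
Since `θ` is irrational, some multiple `qθ` lies within any given `δ > 0` of an integer without
being one, so stepping by `q` moves `θ n + x` around the circle by less than `δ`, always in the same
direction. Hence every interval of length `δ` is visited within a bounded number `T` of steps,
uniformly in the starting point. With `η = min θ (1 - θ) / (2 (k + 1))`, choose `m ≥ T` with
`{θ m} ∈ (η, 2η)`. For blocks `a < b`, pick `t < m` with `{θ (j + a m + t) + x} ∈ (1 - θ - η, 1 - θ)`:
the `t`-th letter of block `a` is `0`, and passing to block `b` adds `(b - a) {θ m} ∈ [η, θ]` to
this fractional part without wrapping around, so the `t`-th letter of block `b` is `1`.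
-/

/-- The `i`-th block of length `m` of the infinite word `s` starting from position `j`,
so that the factor of `s` of length `k*m` beginning at position `j` is
`factorBlock s j m 0 ++ ⋯ ++ factorBlock s j m (k-1)`. -/
def factorBlock {A : Type*} (s : ℕ → A) (j m i : ℕ) : List A :=
  (List.range m).map fun t => s (j + i * m + t)

/-- The upper mechanical word `s_{θ,x}` (0-indexed): the `n`-th letter is `1` if the
fractional part of `θ·n + x` lies in `[1-θ, 1)` and `0` if it lies in `[0, 1-θ)`. -/
noncomputable def upperMech (θ x : ℝ) : ℕ → ℕ := fun n =>
  if 1 - θ ≤ Int.fract (θ * n + x) then 1 else 0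

open Set

lemma exists_nat_add_nat_mul_mem_Ioo {β δ y w : ℝ} (hβ : 0 < β) (hβδ : β < δ) (hyw : y ≤ w) :
    ∃ s : ℕ, (s : ℝ) ≤ (w - y) / β + 1 ∧ y + s * β ∈ Ioo w (w + δ) := by
  have hfloor := Nat.floor_le (div_nonneg (sub_nonneg.2 hyw) hβ.le)
  have hle : ⌊(w - y) / β⌋₊ * β ≤ w - y := (le_div_iff₀ hβ).1 hfloor
  have hlt : w - y < (⌊(w - y) / β⌋₊ + 1) * β := (div_lt_iff₀ hβ).1 (Nat.lt_floor_add_one _)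
  refine ⟨⌊(w - y) / β⌋₊ + 1, ?_, ?_, ?_⟩ <;> push_cast <;> linarith

lemma exists_nat_fract_add_nat_mul_mem_Ioo {z δ c : ℝ} (hz : Int.fract z ∈ Ioo 0 δ)
    (hc : 0 ≤ c) (hcδ : c + δ ≤ 1) (y : ℝ) :
    ∃ s : ℕ, (s : ℝ) ≤ 2 / Int.fract z + 1 ∧ Int.fract (y + s * z) ∈ Ioo c (c + δ) := by
  obtain ⟨s, hs, hlo, hhi⟩ :=
    exists_nat_add_nat_mul_mem_Ioo (y := y) (w := c + ⌊y⌋ + 1) hz.1 hz.2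
      (by linarith [Int.lt_floor_add_one y])
  have hfract : Int.fract (y + s * z) = y + s * Int.fract z - (⌊y⌋ + 1) := by
    rw [Int.fract_eq_iff]
    refine ⟨by linarith, by linarith, s * ⌊z⌋ + ⌊y⌋ + 1, ?_⟩
    rw [Int.fract]
    push_cast
    ring
  refine ⟨s, hs.trans ?_, ?_, ?_⟩
  · have : c + ⌊y⌋ + 1 - y ≤ 2 := by linarith [Int.floor_le y]
    gcongr
  all_goals rw [hfract]; linarith

lemma exists_nat_fract_add_nat_mul_mem_Ioo_of_fract_neg {z δ c : ℝ}
    (hz : Int.fract (-z) ∈ Ioo 0 δ) (hc : 0 ≤ c) (hcδ : c + δ ≤ 1) (y : ℝ) :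
    ∃ s : ℕ, (s : ℝ) ≤ 2 / Int.fract (-z) + 1 ∧ Int.fract (y + s * z) ∈ Ioo c (c + δ) := by
  obtain ⟨s, hs, hlo, hhi⟩ :=
    exists_nat_fract_add_nat_mul_mem_Ioo hz (c := 1 - c - δ) (by linarith) (by linarith) (-y)
  have hneg : -y + s * -z = -(y + s * z) := by ring
  rw [hneg] at hlo hhi
  have hfract := Int.fract_neg (x := -(y + s * z)) (by linarith)
  rw [neg_neg] at hfract
  exact ⟨s, hs, by linarith, by linarith⟩

lemma exists_bound_fract_add_nat_mul_mem_Ioo {z δ : ℝ}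
    (hz : Int.fract z ∈ Ioo 0 δ ∨ Int.fract (-z) ∈ Ioo 0 δ) :
    ∃ N : ℕ, ∀ y c, 0 ≤ c → c + δ ≤ 1 → ∃ s < N, Int.fract (y + s * z) ∈ Ioo c (c + δ) := by
  rcases hz with hz | hz
  · refine ⟨⌊2 / Int.fract z + 1⌋₊ + 1, fun y c hc hcδ => ?_⟩
    obtain ⟨s, hs, h⟩ := exists_nat_fract_add_nat_mul_mem_Ioo hz hc hcδ y
    exact ⟨s, Nat.lt_succ_of_le (Nat.le_floor hs), h⟩
  · refine ⟨⌊2 / Int.fract (-z) + 1⌋₊ + 1, fun y c hc hcδ => ?_⟩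
    obtain ⟨s, hs, h⟩ := exists_nat_fract_add_nat_mul_mem_Ioo_of_fract_neg hz hc hcδ y
    exact ⟨s, Nat.lt_succ_of_le (Nat.le_floor hs), h⟩

lemma Irrational.exists_fract_nat_mul_mem_Ioo {θ δ : ℝ} (hθ : Irrational θ) (hδ : 0 < δ)
    (hδ1 : δ ≤ 1) :
    ∃ q : ℕ, 0 < q ∧ (Int.fract (q * θ) ∈ Ioo 0 δ ∨ Int.fract (-(q * θ)) ∈ Ioo 0 δ) := by
  obtain ⟨n, hn⟩ := exists_nat_gt (1 / δ)
  have hn0 : 0 < n := by exact_mod_cast (one_div_pos.2 hδ).trans hn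
  obtain ⟨q, hq, -, happrox⟩ := Real.exists_nat_abs_mul_sub_round_le θ hn0
  set ε := q * θ - round (q * θ)
  have hε0 : ε ≠ 0 := sub_ne_zero.2 ((hθ.natCast_mul hq.ne').ne_int _)
  have hεδ : |ε| < δ := by
    refine happrox.trans_lt ?_
    rw [div_lt_iff₀ (by positivity)]
    rw [div_lt_iff₀ hδ] at hn
    linarith
  refine ⟨q, hq, ?_⟩
  rcases hε0.lt_or_gt with hneg | hpos
  · rw [abs_of_neg hneg] at hεδ
    right
    have : Int.fract (-(q * θ)) = -ε :=
      Int.fract_eq_iff.2 ⟨by linarith, by linarith, -round (q * θ), by push_cast; ring⟩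
    exact this ▸ ⟨by linarith, hεδ⟩
  · rw [abs_of_pos hpos] at hεδ
    left
    have : Int.fract (q * θ) = ε :=
      Int.fract_eq_iff.2 ⟨hpos.le, by linarith, round (q * θ), by ring⟩
    exact this ▸ ⟨hpos, hεδ⟩

lemma Irrational.exists_bound_fract_add_nat_mul_mem_Ioo {θ δ : ℝ} (hθ : Irrational θ)
    (hδ : 0 < δ) (hδ1 : δ ≤ 1) :
    ∃ T : ℕ, ∀ y c, 0 ≤ c → c + δ ≤ 1 → ∃ t < T, Int.fract (y + t * θ) ∈ Ioo c (c + δ) := by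
  obtain ⟨q, hq, hz⟩ := hθ.exists_fract_nat_mul_mem_Ioo hδ hδ1
  obtain ⟨N, hN⟩ := _root_.exists_bound_fract_add_nat_mul_mem_Ioo hz
  refine ⟨N * q, fun y c hc hcδ => ?_⟩
  obtain ⟨s, hs, h⟩ := hN y c hc hcδ
  refine ⟨s * q, Nat.mul_lt_mul_of_pos_right hs hq, ?_⟩
  rwa [Nat.cast_mul, mul_assoc]

lemma factorBlock_ne_of_ne {A : Type*} {s : ℕ → A} {j m a b t : ℕ} (ht : t < m)
    (hne : s (j + a * m + t) ≠ s (j + b * m + t)) :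
    factorBlock s j m a ≠ factorBlock s j m b := by
  intro h
  apply hne
  simpa [factorBlock, ht] using congrArg (·[t]?) h

lemma upperMech_eq_zero {θ x : ℝ} {n : ℕ} (h : Int.fract (θ * n + x) < 1 - θ) :
    upperMech θ x n = 0 :=
  if_neg h.not_ge

lemma upperMech_add_mul_eq_one {θ x η : ℝ} {n l m : ℕ}
    (hn : Int.fract (θ * n + x) ∈ Ioo (1 - θ - η) (1 - θ))
    (hlo : η ≤ l * Int.fract (θ * m)) (hhi : l * Int.fract (θ * m) ≤ θ) :
    upperMech θ x (n + l * m) = 1 := by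
  have hfract :
      Int.fract (θ * ↑(n + l * m) + x) = Int.fract (θ * n + x) + l * Int.fract (θ * m) := by
    have : 0 ≤ (l : ℝ) * Int.fract (θ * m) := by positivity
    refine Int.fract_eq_iff.2 ⟨by linarith [Int.fract_nonneg (θ * n + x)], by linarith [hn.2],
      ⌊θ * n + x⌋ + l * ⌊θ * m⌋, ?_⟩
    simp only [Int.fract]
    push_cast
    ring
  exact if_pos (by rw [hfract]; linarith [hn.1])

lemma upperMech_factorBlock_ne {θ x η : ℝ} {T m k a b : ℕ}
    (hT : ∀ y c, 0 ≤ c → c + η ≤ 1 → ∃ t < T, Int.fract (y + t * θ) ∈ Ioo c (c + η))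
    (hTm : T ≤ m) (hm : Int.fract (θ * m) ∈ Ioo η (2 * η))
    (hηθ : η ≤ 1 - θ) (hkη : 2 * k * η ≤ θ) (hab : a < b) (hbk : b < k) (j : ℕ) :
    factorBlock (upperMech θ x) j m a ≠ factorBlock (upperMech θ x) j m b := by
  obtain ⟨l, rfl⟩ := Nat.exists_eq_add_of_lt hab
  have hlk : ((l + 1 : ℕ) : ℝ) ≤ k := by exact_mod_cast (by omega : l + 1 ≤ k)
  have hd : η ≤ ((l + 1 : ℕ) : ℝ) * Int.fract (θ * m) :=
    hm.1.le.trans (le_mul_of_one_le_left (Int.fract_nonneg _) (by simp))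
  have hd' : ((l + 1 : ℕ) : ℝ) * Int.fract (θ * m) ≤ θ := by
    nlinarith [mul_le_mul hlk hm.2.le (Int.fract_nonneg _) k.cast_nonneg]
  obtain ⟨t, htT, ht⟩ :=
    hT (θ * (j + a * m) + x) (1 - θ - η) (by linarith) (by linarith [hm.1, hm.2])
  have hpos : θ * ↑(j + a * m + t) + x = θ * (j + a * m) + x + t * θ := by push_cast; ring
  rw [← hpos, sub_add_cancel] at ht
  refine factorBlock_ne_of_ne (t := t) (by omega) ?_
  rw [show j + (a + l + 1) * m + t = (j + a * m + t) + (l + 1) * m by ring,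
    upperMech_eq_zero ht.2, upperMech_add_mul_eq_one ht hd hd']
  exact zero_ne_one

theorem statement14_general (θ x : ℝ) (hθ0 : 0 < θ) (hθ1 : θ < 1) (hirr : Irrational θ)
    (k : ℕ) (j : ℕ) :
    ∃ m : ℕ, 1 ≤ m ∧ ∀ a < k, ∀ b < k, a ≠ b →
      factorBlock (upperMech θ x) j m a ≠ factorBlock (upperMech θ x) j m b := by
  set μ := min θ (1 - θ)
  have hμ : 0 < μ := lt_min hθ0 (by linarith)
  set η := μ / (2 * (k + 1))
  have hη : 0 < η := by positivity
  have hμη : 2 * (k + 1) * η = μ := mul_div_cancel₀ μ (by positivity)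
  have hkη : 2 * k * η ≤ θ := by nlinarith [min_le_left θ (1 - θ)]
  have h2η : 2 * η ≤ 1 - θ := by nlinarith [min_le_right θ (1 - θ)]
  obtain ⟨T, hT⟩ := hirr.exists_bound_fract_add_nat_mul_mem_Ioo hη (by linarith)
  obtain ⟨t₀, ht₀, hm⟩ := hT (θ * T) η hη.le (by linarith)
  rw [← mul_comm θ, ← mul_add, ← Nat.cast_add, ← two_mul] at hm
  refine ⟨T + t₀, by omega, fun a ha b hb hab => ?_⟩
  rcases hab.lt_or_gt with h | h
  · exact upperMech_factorBlock_ne hT (by omega) hm (by linarith) hkη h hb j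
  · exact (upperMech_factorBlock_ne hT (by omega) hm (by linarith) hkη h ha j).symm

/-- Let `θ ∈ (0,1)` be irrational and `x ∈ ℝ`.  For every `k ≥ 2` and
every position `j`, there is an `m ≥ 1` such that the factor of the Sturmian word
`s_{θ,x}` of length `k*m` beginning at position `j` is a `k`-anti-power, i.e. its `k`
consecutive blocks of length `m` are pairwise distinct. -/
theorem statement14 (θ x : ℝ) (hθ0 : 0 < θ) (hθ1 : θ < 1) (hirr : Irrational θ)
    (k : ℕ) (hk : 2 ≤ k) (j : ℕ) :
    ∃ m : ℕ, 1 ≤ m ∧ ∀ a < k, ∀ b < k, a ≠ b →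
      factorBlock (upperMech θ x) j m a ≠ factorBlock (upperMech θ x) j m b :=
  statement14_general θ x hθ0 hθ1 hirr k j
end
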